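/- Fix integers 1 ≤ r ≤ n. Let f ∈ ℂ[x₁,…,x_r] be a polynomial such that for every permutation w ∈ S_r (acting by permuting the variables x₁,…,x_r), the polynomial w·f − sgn(w)·f lies in the ideal generated by x₁^n, …, x_r^n. Then there exists a symmetric polynomial P ∈ ℂ[x₁,…,x_r] such that f − P·Δ lies in the ideal generated by x₁^n, …, x_r^n. -/
import Mathlib

open Finset MvPolynomial

/-- The Vandermonde determinant `Δ = ∏_{1 ≤ i < j ≤ r} (xᵢ - xⱼ)`. -/
noncomputable def vander (r : ℕ) : MvPolynomial (Fin r) ℂ :=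
  ∏ p ∈ Finset.univ.filter (fun p : Fin r × Fin r => p.1 < p.2), (X p.1 - X p.2)

namespace ESaux

variable {r : ℕ}

/-- substitution sending `X j` to `X i` and fixing other variables -/
noncomputable def sb (i j : Fin r) : Fin r → MvPolynomial (Fin r) ℂ :=
  fun k => if k = j then X i else X k

lemma dvd_sub_aeval (i j : Fin r) (h : MvPolynomial (Fin r) ℂ) :
    (X i - X j : MvPolynomial (Fin r) ℂ) ∣ h - aeval (sb i j) h := by
  induction h using MvPolynomial.induction_on with
  | C a => simp
  | add p q hp hq =>
      have e : p + q - aeval (sb i j) (p + q)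
          = (p - aeval (sb i j) p) + (q - aeval (sb i j) q) := by
        rw [map_add]; ring
      rw [e]; exact dvd_add hp hq
  | mul_X p k hp =>
      have e : p * X k - aeval (sb i j) (p * X k)
          = (p - aeval (sb i j) p) * X k + aeval (sb i j) p * (X k - sb i j k) := by
        rw [map_mul, aeval_X]; ring
      rw [e]
      refine dvd_add (hp.mul_right _) (Dvd.dvd.mul_left ?_ _)
      rcases eq_or_ne k j with rfl | hk
      · have e2 : (X k : MvPolynomial (Fin r) ℂ) - sb i k k = -(X i - X k) := by
          simp [sb]
        rw [e2]; exact (dvd_neg).2 dvd_rfl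
      · simp [sb, hk]

lemma X_sub_X_ne_zero {i j : Fin r} (hij : i ≠ j) :
    (X i - X j : MvPolynomial (Fin r) ℂ) ≠ 0 := by
  intro h
  have := congrArg (eval (fun k : Fin r => if k = i then (1 : ℂ) else 0)) h
  simp [hij, Ne.symm hij] at this

lemma aeval_sb_eq_zero_iff {i j : Fin r} (hij : i ≠ j) (h : MvPolynomial (Fin r) ℂ) :
    aeval (sb i j) h = 0 ↔ (X i - X j : MvPolynomial (Fin r) ℂ) ∣ h := by
  constructor
  · intro h0
    have := dvd_sub_aeval i j h
    rw [h0, sub_zero] at this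
    exact this
  · rintro ⟨q, rfl⟩
    rw [map_mul, map_sub, aeval_X, aeval_X]
    simp [sb, hij]


lemma prod_pairs {M : Type*} [CommMonoid M] (F : Fin r → Fin r → M) :
    ∏ p ∈ Finset.univ.filter (fun p : Fin r × Fin r => p.1 < p.2), F p.1 p.2
      = ∏ i : Fin r, ∏ j ∈ Ioi i, F i j := by
  rw [Finset.prod_sigma']
  refine Finset.prod_nbij' (fun p => ⟨p.1, p.2⟩) (fun a => (a.1, a.2)) ?_ ?_ ?_ ?_ ?_ <;>
    simp +contextual [Finset.mem_sigma, Finset.mem_Ioi, Finset.mem_filter]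

lemma key_det (v : Fin r → MvPolynomial (Fin r) ℂ) :
    ∏ p ∈ Finset.univ.filter (fun p : Fin r × Fin r => p.1 < p.2), (v p.1 - v p.2)
      = (-1 : MvPolynomial (Fin r) ℂ) ^
          (Finset.univ.filter (fun p : Fin r × Fin r => p.1 < p.2)).card *
        (Matrix.vandermonde v).det := by
  rw [Matrix.det_vandermonde, ← prod_pairs (fun i j => v j - v i),
    ← Finset.prod_const, ← Finset.prod_mul_distrib]
  apply Finset.prod_congr rfl
  intro p _; ring

lemma rename_vander (u : Equiv.Perm (Fin r)) :
    rename ⇑u (vander r)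
      = ((Equiv.Perm.sign u : ℤ) : MvPolynomial (Fin r) ℂ) * vander r := by
  have h1 : rename ⇑u (vander r)
      = ∏ p ∈ Finset.univ.filter (fun p : Fin r × Fin r => p.1 < p.2),
          ((X ∘ ⇑u) p.1 - (X ∘ ⇑u) p.2) := by
    rw [vander, map_prod]
    simp [Function.comp]
  have h2 : Matrix.vandermonde (X ∘ ⇑u : Fin r → MvPolynomial (Fin r) ℂ)
      = (Matrix.vandermonde X).submatrix ⇑u id := by
    ext i j
    simp [Matrix.vandermonde, Matrix.submatrix]
  rw [h1, key_det, h2, Matrix.det_permute, vander, key_det]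
  ring


lemma vander_dvd (g : MvPolynomial (Fin r) ℂ)
    (hg : ∀ i j : Fin r, i < j → aeval (sb i j) g = 0) : vander r ∣ g := by
  suffices H : ∀ S : Finset (Fin r × Fin r), (∀ p ∈ S, p.1 < p.2) →
      (∏ p ∈ S, (X p.1 - X p.2 : MvPolynomial (Fin r) ℂ)) ∣ g by
    exact H _ (fun p hp => (Finset.mem_filter.1 hp).2)
  intro S
  induction S using Finset.cons_induction with
  | empty => intro _; simp
  | cons p S hp ih =>
      intro hS
      have hpS : p.1 < p.2 := hS p (Finset.mem_cons_self _ _)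
      obtain ⟨q, hq⟩ := ih (fun a ha => hS a (Finset.mem_cons_of_mem ha))
      have h0 := hg p.1 p.2 hpS
      rw [hq, map_mul] at h0
      have hprod : aeval (sb p.1 p.2) (∏ a ∈ S, (X a.1 - X a.2 : MvPolynomial (Fin r) ℂ)) ≠ 0 := by
        rw [map_prod]
        rw [Finset.prod_ne_zero_iff]
        intro a ha
        have ha12 : a.1 < a.2 := hS a (Finset.mem_cons_of_mem ha)
        have hap : a ≠ p := fun h => hp (h ▸ ha)
        rw [map_sub, aeval_X, aeval_X]
        unfold sb
        rcases eq_or_ne a.2 p.2 with h2 | h2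
        · have h1 : a.1 ≠ p.2 := ne_of_lt (h2 ▸ ha12)
          have h3 : a.1 ≠ p.1 := fun h => hap (Prod.ext h h2)
          simp only [if_pos h2, if_neg h1]
          exact X_sub_X_ne_zero h3
        · rcases eq_or_ne a.1 p.2 with h1 | h1
          · have h3 : p.1 ≠ a.2 := ne_of_lt (lt_trans hpS (h1 ▸ ha12))
            simp only [if_pos h1, if_neg h2]
            exact X_sub_X_ne_zero h3
          · simp only [if_neg h1, if_neg h2]
            exact X_sub_X_ne_zero (ne_of_lt ha12)
      have hq0 : aeval (sb p.1 p.2) q = 0 := by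
        rcases mul_eq_zero.1 h0 with h | h
        · exact absurd h hprod
        · exact h
      obtain ⟨q', hq'⟩ := (aeval_sb_eq_zero_iff (ne_of_lt hpS) q).1 hq0
      rw [Finset.prod_cons, hq, hq']
      exact ⟨q', by ring⟩


lemma vander_ne_zero : vander r ≠ 0 := by
  rw [vander, Finset.prod_ne_zero_iff]
  intro p hp
  exact X_sub_X_ne_zero (ne_of_lt (Finset.mem_filter.1 hp).2)


end ESaux

open ESaux

/-- Image characterization in Corollary 2.2 (Ellingsrud–Strømme): for `1 ≤ r ≤ n`, if
`f ∈ ℂ[x₁,…,x_r]` is anti-symmetric modulo the ideal `⟨x₁ⁿ, …, x_rⁿ⟩` (i.e. for every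
permutation `w` of the variables, `w·f - sgn(w)·f` lies in the ideal), then there is a
symmetric polynomial `P` with `f - P·Δ ∈ ⟨x₁ⁿ, …, x_rⁿ⟩`. -/
theorem ES_image (n r : ℕ) (hr : 1 ≤ r) (hrn : r ≤ n)
    (f : MvPolynomial (Fin r) ℂ)
    (hf : ∀ w : Equiv.Perm (Fin r),
      rename (⇑w) f - ((Equiv.Perm.sign w : ℤ) : ℤ) • f ∈
        Ideal.span (Set.range fun i : Fin r => (X i : MvPolynomial (Fin r) ℂ) ^ n)) :
    ∃ P : MvPolynomial (Fin r) ℂ, P.IsSymmetric ∧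
      f - P * vander r ∈
        Ideal.span (Set.range fun i : Fin r => (X i : MvPolynomial (Fin r) ℂ) ^ n) := by
  classical
  set I := Ideal.span (Set.range fun i : Fin r => (X i : MvPolynomial (Fin r) ℂ) ^ n) with hI
  set ε : Equiv.Perm (Fin r) → MvPolynomial (Fin r) ℂ :=
    fun w => ((Equiv.Perm.sign w : ℤ) : MvPolynomial (Fin r) ℂ) with hε
  have hεsq : ∀ w, ε w * ε w = 1 := by
    intro w
    simp only [hε]
    rw [← Int.cast_mul, ← Units.val_mul, Int.units_mul_self]
    simp
  have hεdef : ∀ u : Equiv.Perm (Fin r),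
      ε u = ((Equiv.Perm.sign u : ℤ) : MvPolynomial (Fin r) ℂ) := fun _ => rfl
  have hεmul : ∀ u w, ε (u * w) = ε u * ε w := by
    intro u w
    simp only [hε, map_mul, Units.val_mul, Int.cast_mul]
  -- antisymmetrization
  set S : MvPolynomial (Fin r) ℂ :=
    ∑ w : Equiv.Perm (Fin r), ε w * rename ⇑w f with hSdef
  -- S is exactly antisymmetric
  have hS : ∀ u : Equiv.Perm (Fin r), rename ⇑u S = ε u * S := by
    intro u
    rw [hSdef, map_sum, Finset.mul_sum]
    refine Fintype.sum_equiv (Equiv.mulLeft u) _ _ ?_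
    intro w
    rw [map_mul]
    have h1 : rename ⇑u (ε w) = ε w := by
      simp only [hε]; simp
    have h2 : rename ⇑u (rename ⇑w f) = rename ⇑(u * w) f := by
      rw [rename_rename]
      congr 1
    rw [h1, h2]
    show ε w * rename (⇑(u * w)) f = ε u * (ε (u * w) * rename ⇑(u * w) f)
    rw [hεmul, ← mul_assoc, ← mul_assoc, hεsq, one_mul]
  -- S ≡ r! * f  mod I
  have hSf : S - ((r.factorial : ℂ) • f) ∈ I := by
    have hcard : ((r.factorial : ℂ) • f) = ∑ _w : Equiv.Perm (Fin r), f := by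
      rw [Finset.sum_const, card_univ, Fintype.card_perm, Fintype.card_fin]
      rw [smul_eq_C_mul, nsmul_eq_mul]
      simp
    rw [hcard, ← Finset.sum_sub_distrib]
    refine Ideal.sum_mem _ ?_
    intro w _
    have hterm : ε w * rename ⇑w f - f = ε w * (rename ⇑w f - ε w * f) := by
      rw [mul_sub, ← mul_assoc, hεsq, one_mul]
    rw [hterm]
    refine Ideal.mul_mem_left _ _ ?_
    have := hf w
    rw [zsmul_eq_mul] at this
    rw [hεdef]
    exact_mod_cast this
  -- S vanishes under each substitution X j ↦ X i
  have hvan : ∀ i j : Fin r, i < j → aeval (sb i j) S = 0 := by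
    intro i j hij
    have hne : i ≠ j := ne_of_lt hij
    have hswap := hS (Equiv.swap i j)
    have hsgn : ε (Equiv.swap i j) = -1 := by
      simp only [hε, Equiv.Perm.sign_swap hne]
      simp
    rw [hsgn] at hswap
    have hcomp : (sb i j) ∘ ⇑(Equiv.swap i j) = sb i j := by
      funext k
      rcases eq_or_ne k i with rfl | hki
      · simp [sb, Equiv.swap_apply_left, hne, Ne.symm hne]
      · rcases eq_or_ne k j with rfl | hkj
        · simp [sb, Equiv.swap_apply_right, hne]
        · simp [sb, Equiv.swap_apply_of_ne_of_ne hki hkj, hkj]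
    have h1 : aeval (sb i j) S = - aeval (sb i j) S := by
      conv_lhs => rw [← hcomp, ← aeval_rename, hswap]
      rw [neg_one_mul, map_neg]
    have h2 : (2 : MvPolynomial (Fin r) ℂ) * aeval (sb i j) S = 0 := by
      linear_combination h1
    rcases mul_eq_zero.1 h2 with h | h
    · exact absurd h two_ne_zero
    · exact h
  obtain ⟨Q, hQ⟩ := vander_dvd S hvan
  -- Q is symmetric
  have hQsym : Q.IsSymmetric := by
    intro u
    have := hS u
    rw [hQ, map_mul, rename_vander] at this
    have hcancel : vander r * rename ⇑u Q = vander r * Q := by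
      rw [← hεdef u] at this
      have h3 : ε u * (vander r * rename ⇑u Q) = ε u * (vander r * Q) := by
        rw [← this]; ring
      have hεne : ε u ≠ 0 := by
        intro h
        have := hεsq u
        rw [h, mul_zero] at this
        exact one_ne_zero this.symm
      exact mul_left_cancel₀ hεne h3
    exact mul_left_cancel₀ vander_ne_zero hcancel
  refine ⟨C ((r.factorial : ℂ)⁻¹) * Q, ?_, ?_⟩
  · intro u
    rw [map_mul, rename_C, hQsym u]
  · have hfac : ((r.factorial : ℂ)) ≠ 0 := Nat.cast_ne_zero.2 r.factorial_ne_zero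
    have key : f - C ((r.factorial : ℂ)⁻¹) * Q * vander r
        = -(C ((r.factorial : ℂ)⁻¹) * (S - (r.factorial : ℂ) • f)) := by
      rw [smul_eq_C_mul]
      have : (C ((r.factorial : ℂ)⁻¹) * C ((r.factorial : ℂ)) : MvPolynomial (Fin r) ℂ) = 1 := by
        rw [← C_mul, inv_mul_cancel₀ hfac, C_1]
      calc f - C ((r.factorial : ℂ)⁻¹) * Q * vander r
          = f - C ((r.factorial : ℂ)⁻¹) * S := by rw [hQ]; ring
        _ = C ((r.factorial : ℂ)⁻¹) * C ((r.factorial : ℂ)) * f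
            - C ((r.factorial : ℂ)⁻¹) * S := by rw [this, one_mul]
        _ = -(C ((r.factorial : ℂ)⁻¹) * (S - C ((r.factorial : ℂ)) * f)) := by ring
    rw [key]
    exact neg_mem (Ideal.mul_mem_left _ _ hSf)
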